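/- arXiv:2602.10456 — 8 statements merged into one kernel-verified Lean document; each statement's English description precedes it below -/
import Mathlib

section
/- The piecewise function Λ(x) defined by Λ(x) = a·x − b·x² for x ∈ [0, k) and Λ(x) = L for x ≥ k, where a = (F/(2l))·(Δ + S·(η_E + η_L)/(η_E·η_L)), b = (F/(2l))²·S·((η_E + η_L)/(η_E·η_L))·(Δ/L), and k = min(2lλ/F, 2lL·η_E·η_L/(F·S·(η_E + η_L))) with λ = L/Δ, is continuous at x = k (i.e., a·k − b·k² = L). -/
/-- Continuity of the Vickrey-induced minibus rider demand function at the
threshold `k`: the concave quadratic piece attains the value `L` at `k`. -/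
theorem vickrey_demand_continuity_at_threshold
    (F l Δ S ηE ηL L lam a b k : ℝ)
    (hF : 0 < F) (hl : 0 < l) (hΔ : 0 < Δ) (hS : 0 < S)
    (hE : 0 < ηE) (hLpen : 0 < ηL) (hL : 0 < L)
    (hlam : lam = L / Δ)
    (ha : a = F / (2 * l) * (Δ + S * (ηE + ηL) / (ηE * ηL)))
    (hb : b = (F / (2 * l)) ^ 2 * S * ((ηE + ηL) / (ηE * ηL)) * (Δ / L))
    (hk : k = min (2 * l * lam / F) (2 * l * L * ηE * ηL / (F * S * (ηE + ηL)))) :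
    a * k - b * k ^ 2 = L := by
  have hEL : 0 < ηE + ηL := by linarith
  subst hlam ha hb
  rcases min_choice (2 * l * (L / Δ) / F) (2 * l * L * ηE * ηL / (F * S * (ηE + ηL))) with h | h <;>
    rw [h] at hk <;> subst hk <;>
    field_simp <;> ring
end

section
/- Consider n routes with per-rider profits p_i > 0 and demand functions Λ_i: ℝ≥0 → ℝ≥0 that are continuous, non-decreasing, concave with Λ_i(0) = 0. Define per-driver profit π_i(x) = p_i Λ_i(x)/x for x > 0 and π_i(0) = p_i·Λ_i'(0+) (right derivative). Let x^Eq ∈ ℝ≥0^n with Σ x_i^Eq = D be an equilibrium allocation: there exists π^Eq such that π_i(x_i^Eq) = π^Eq for all i with x_i^Eq > 0, and π_j(x_j^Eq) ≤ π^Eq for all j. Then for any x* ∈ ℝ≥0^n with Σ x_i* = D, Σ_i p_i Λ_i(x_i*) ≤ 2 Σ_i p_i Λ_i(x_i^Eq). -/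
/-!
Let `π` be the equilibrium per-driver profit. By concavity and `Λ(0) = 0` the per-driver profit
`p Λ(x) / x` of a route is non-increasing in `x`, so on every route
`p Λ(x*) ≤ p Λ(x^Eq) + π x*`: if `x* ≤ x^Eq` by monotonicity of `Λ`, and otherwise because the
per-driver profit at `x*` is at most the one at `x^Eq`, which is at most `π`. Summing over routes,
the right-hand side is `P(x^Eq) + π D`, and `π D = P(x^Eq)` since every used route earns exactly
`π` per driver.
-/

open Classical Set

/-- The paper's per-driver profit `π_i`, with `d` the right derivative of `f` at `0`. -/
noncomputable def perDriverProfit (p : ℝ) (f : ℝ → ℝ) (d x : ℝ) : ℝ :=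
  if 0 < x then p * f x / x else p * d

section Concave

variable {f : ℝ → ℝ} {d : ℝ}

lemma slope_zero_eq_div (h0 : f 0 = 0) (x : ℝ) : slope f 0 x = f x / x := by
  simp [slope_def_field, h0]

lemma ConcaveOn.div_antitoneOn_Ioi (hconc : ConcaveOn ℝ (Ici 0) f) (h0 : f 0 = 0) :
    AntitoneOn (fun x ↦ f x / x) (Ioi 0) := by
  have hslope : AntitoneOn (slope f 0) (Ioi 0) :=
    (hconc.slope_anti self_mem_Ici).mono fun x (hx : 0 < x) ↦ ⟨hx.le, hx.ne'⟩
  rwa [funext (slope_zero_eq_div h0)] at hslope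

lemma ConcaveOn.div_le_of_hasDerivWithinAt (hconc : ConcaveOn ℝ (Ici 0) f) (h0 : f 0 = 0)
    (hd : HasDerivWithinAt f d (Ici 0) 0) {y : ℝ} (hy : 0 < y) : f y / y ≤ d := by
  rw [← slope_zero_eq_div h0]
  exact hconc.slope_le_of_hasDerivWithinAt self_mem_Ici hy.le hy hd

end Concave

section Route

variable {p : ℝ} {f : ℝ → ℝ} {d : ℝ}

lemma perDriverProfit_antitoneOn (hp : 0 ≤ p) (hconc : ConcaveOn ℝ (Ici 0) f) (h0 : f 0 = 0)
    (hd : HasDerivWithinAt f d (Ici 0) 0) : AntitoneOn (perDriverProfit p f d) (Ici 0) := by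
  rintro x (hx : 0 ≤ x) y (hy : 0 ≤ y) hxy
  rcases hx.eq_or_lt with rfl | hx_pos
  · rcases hy.eq_or_lt with rfl | hy_pos
    · exact le_rfl
    · simp only [perDriverProfit, hy_pos, lt_irrefl, if_true, if_false, mul_div_assoc]
      exact mul_le_mul_of_nonneg_left (hconc.div_le_of_hasDerivWithinAt h0 hd hy_pos) hp
  · have hy_pos := hx_pos.trans_le hxy
    simp only [perDriverProfit, hx_pos, hy_pos, if_true, mul_div_assoc]
    exact mul_le_mul_of_nonneg_left (hconc.div_antitoneOn_Ioi h0 hx_pos hy_pos hxy) hp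

lemma mul_apply_le_add_of_perDriverProfit_le (hp : 0 ≤ p) (hmono : MonotoneOn f (Ici 0))
    (hconc : ConcaveOn ℝ (Ici 0) f) (h0 : f 0 = 0) (hd : HasDerivWithinAt f d (Ici 0) 0)
    {x y π : ℝ} (hx : 0 ≤ x) (hy : 0 ≤ y) (hπ : perDriverProfit p f d x ≤ π) :
    p * f y ≤ p * f x + π * y := by
  have hf_nonneg : ∀ z, 0 ≤ z → 0 ≤ f z := fun z hz ↦ h0 ▸ hmono self_mem_Ici hz hz
  rcases le_or_gt y x with hyx | hxy
  · have hπy : 0 ≤ π * y := by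
      rcases hy.eq_or_lt with rfl | hy_pos
      · simp
      · have hx_pos := hy_pos.trans_le hyx
        have : 0 ≤ perDriverProfit p f d x := by
          simp only [perDriverProfit, hx_pos, if_true]
          exact div_nonneg (mul_nonneg hp (hf_nonneg x hx)) hx
        exact mul_nonneg (this.trans hπ) hy
    have := mul_le_mul_of_nonneg_left (hmono hy hx hyx) hp
    linarith
  · have hy_pos := hx.trans_lt hxy
    have hslope : p * f y / y ≤ π := by
      have := (perDriverProfit_antitoneOn hp hconc h0 hd hx hy hxy.le).trans hπ
      simpa only [perDriverProfit, hy_pos, if_true] using this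
    have := (div_le_iff₀ hy_pos).1 hslope
    linarith [mul_nonneg hp (hf_nonneg x hx)]

lemma mul_apply_eq_mul_of_div_eq (h0 : f 0 = 0) {x π : ℝ} (hx : 0 ≤ x)
    (hπ : 0 < x → p * f x / x = π) : p * f x = π * x := by
  rcases hx.eq_or_lt with rfl | hx_pos
  · simp [h0]
  · rw [← hπ hx_pos, div_mul_cancel₀ _ hx_pos.ne']

end Route

theorem profit_poa_le_two_general
    (n : ℕ) (p : Fin n → ℝ) (Λ : Fin n → ℝ → ℝ) (d : Fin n → ℝ) (D : ℝ)
    (hp : ∀ i, 0 < p i)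
    (hmono : ∀ i, MonotoneOn (Λ i) (Set.Ici 0))
    (hconc : ∀ i, ConcaveOn ℝ (Set.Ici 0) (Λ i))
    (h0 : ∀ i, Λ i 0 = 0)
    (hd : ∀ i, HasDerivWithinAt (Λ i) (d i) (Set.Ici 0) 0)
    (xEq : Fin n → ℝ) (hxEqnn : ∀ i, 0 ≤ xEq i) (hsumEq : ∑ i, xEq i = D)
    (πEq : ℝ)
    (heq1 : ∀ i, 0 < xEq i → p i * Λ i (xEq i) / xEq i = πEq)
    (heq2 : ∀ j, (if 0 < xEq j then p j * Λ j (xEq j) / xEq j else p j * d j) ≤ πEq)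
    (xs : Fin n → ℝ) (hxsnn : ∀ i, 0 ≤ xs i) (hsum : ∑ i, xs i = D) :
    ∑ i, p i * Λ i (xs i) ≤ 2 * ∑ i, p i * Λ i (xEq i) := by
  have hEq : ∑ i, p i * Λ i (xEq i) = πEq * D := by
    rw [← hsumEq, Finset.mul_sum]
    exact Finset.sum_congr rfl fun i _ ↦
      mul_apply_eq_mul_of_div_eq (h0 i) (hxEqnn i) (heq1 i)
  calc ∑ i, p i * Λ i (xs i) ≤ ∑ i, (p i * Λ i (xEq i) + πEq * xs i) :=
        Finset.sum_le_sum fun i _ ↦ mul_apply_le_add_of_perDriverProfit_le (hp i).le (hmono i)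
          (hconc i) (h0 i) (hd i) (hxEqnn i) (hxsnn i) (heq2 i)
    _ = 2 * ∑ i, p i * Λ i (xEq i) := by
        rw [Finset.sum_add_distrib, ← Finset.mul_sum, hsum, hEq]
        ring

/-- Price of anarchy bound of 2 for cumulative driver profit: for any
equilibrium driver allocation `xEq` and any allocation `xs` of the same total
driver mass `D`, the cumulative profit of `xs` is at most twice that of `xEq`. -/
theorem profit_poa_le_two
    (n : ℕ) (p : Fin n → ℝ) (Λ : Fin n → ℝ → ℝ) (d : Fin n → ℝ) (D : ℝ)
    (hD : 0 < D)
    (hp : ∀ i, 0 < p i)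
    (hcont : ∀ i, ContinuousOn (Λ i) (Set.Ici 0))
    (hmono : ∀ i, MonotoneOn (Λ i) (Set.Ici 0))
    (hconc : ∀ i, ConcaveOn ℝ (Set.Ici 0) (Λ i))
    (h0 : ∀ i, Λ i 0 = 0)
    (hnn : ∀ i x, 0 ≤ x → 0 ≤ Λ i x)
    (hd : ∀ i, HasDerivWithinAt (Λ i) (d i) (Set.Ici 0) 0)
    (xEq : Fin n → ℝ) (hxEqnn : ∀ i, 0 ≤ xEq i) (hsumEq : ∑ i, xEq i = D)
    (πEq : ℝ)
    (heq1 : ∀ i, 0 < xEq i → p i * Λ i (xEq i) / xEq i = πEq)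
    (heq2 : ∀ j, (if 0 < xEq j then p j * Λ j (xEq j) / xEq j else p j * d j) ≤ πEq)
    (xs : Fin n → ℝ) (hxsnn : ∀ i, 0 ≤ xs i) (hsum : ∑ i, xs i = D) :
    ∑ i, p i * Λ i (xs i) ≤ 2 * ∑ i, p i * Λ i (xEq i) :=
  profit_poa_le_two_general n p Λ d D hp hmono hconc h0 hd xEq hxEqnn hsumEq πEq heq1 heq2 xs hxsnn
    hsum
end

section
/- For any ε > 0, there exist two routes with piecewise-linear demand functions Λ_i(x) = L_i·min(x/k_i, 1) (with p_i, L_i, k_i > 0, k_1 + k_2 = 1, total driver mass D = 1) and an equilibrium allocation x^Eq = (1, 0) such that the profit ratio (p_1 L_1 + p_2 L_2) / (p_1 Λ_1(1) + p_2 Λ_2(0)) exceeds 2 − ε. -/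
/-- Tightness of the profit price-of-anarchy bound of 2: for any `ε > 0` there
is a two-route instance with piecewise-linear demands `Λᵢ x = Lᵢ * min (x/kᵢ) 1`,
`k₁ + k₂ = 1`, driver mass `D = 1`, in which `(1,0)` is an equilibrium and the
profit ratio exceeds `2 - ε`. -/
theorem profit_poa_tightness :
    ∀ ε : ℝ, 0 < ε →
      ∃ p1 p2 L1 L2 k1 k2 : ℝ,
        0 < p1 ∧ 0 < p2 ∧ 0 < L1 ∧ 0 < L2 ∧ 0 < k1 ∧ 0 < k2 ∧
        k1 + k2 = 1 ∧
        -- (1, 0) is an equilibrium: the per-driver profit on route 1 at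
        -- allocation 1 is at least the per-driver profit on route 2 at 0
        p2 * L2 / k2 ≤ p1 * (L1 * min (1 / k1) 1) / 1 ∧
        -- the optimal profit exceeds (2 - ε) times the equilibrium profit
        (2 - ε) * (p1 * (L1 * min (1 / k1) 1) + p2 * (L2 * min (0 / k2) 1)) <
          p1 * L1 + p2 * L2 := by
  intro ε hε
  set k1 : ℝ := min (ε / 2) (1 / 2) with hk1def
  have hk1pos : 0 < k1 := lt_min (by linarith) (by norm_num)
  have hk1le : k1 ≤ 1 / 2 := min_le_right _ _
  have hk1lt : k1 < ε := lt_of_le_of_lt (min_le_left _ _) (by linarith)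
  set k2 : ℝ := 1 - k1 with hk2def
  have hk2pos : 0 < k2 := by simp only [hk2def]; linarith
  refine ⟨1, 1, 1, k2, k1, k2, one_pos, one_pos, one_pos, hk2pos, hk1pos, hk2pos, by ring, ?_, ?_⟩
  · have hmin : min (1 / k1) 1 = 1 := by
      rw [min_eq_right]
      rw [le_div_iff₀ hk1pos]; linarith
    rw [hmin, one_mul, mul_div_assoc, div_self hk2pos.ne']
    norm_num
  · have hmin : min (1 / k1) 1 = 1 := by
      rw [min_eq_right]
      rw [le_div_iff₀ hk1pos]; linarith
    rw [hmin]
    have : min (0 / k2) 1 = 0 := by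
      rw [zero_div, min_eq_left (by norm_num)]
    rw [this]
    simp only [hk2def]
    nlinarith
end

section
/- Consider n routes with per-rider profits p_i ∈ [p_min, p_max] (with 0 < p_min ≤ p_max) and demand functions Λ_i: ℝ≥0 → ℝ≥0 that are continuous, non-decreasing, concave with Λ_i(0) = 0. Let x^Eq be an equilibrium allocation with Σ x_i^Eq = D (same equilibrium conditions as for the profit PoA). Then for any x* with Σ x_i* = D, Σ_i Λ_i(x_i*) ≤ (1 + p_max/p_min) · Σ_i Λ_i(x_i^Eq). -/
open Classical

-- slope monotonicity for concave f with f 0 = 0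
lemma slope_anti' (f : ℝ → ℝ) (hconc : ConcaveOn ℝ (Set.Ici 0) f) (h0 : f 0 = 0)
    {y x : ℝ} (hy : 0 < y) (hyx : y ≤ x) : y * f x ≤ x * f y := by
  have hx : 0 < x := hy.trans_le hyx
  have ha : (0:ℝ) ≤ 1 - y / x := by
    have : y / x ≤ 1 := (div_le_one hx).2 hyx
    linarith
  have hb : (0:ℝ) ≤ y / x := by positivity
  have hab : (1 - y / x) + y / x = 1 := by ring
  have := hconc.2 (Set.self_mem_Ici) (show x ∈ Set.Ici 0 from hx.le) ha hb hab
  simp only [smul_eq_mul, mul_zero, zero_add, h0] at this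
  have hyx' : y / x * x = y := div_mul_cancel₀ y hx.ne'
  rw [hyx'] at this
  have := mul_le_mul_of_nonneg_left this hx.le
  calc y * f x = x * (y / x * f x) := by field_simp
    _ ≤ x * f y := this

lemma deriv_bound' (f : ℝ → ℝ) (d : ℝ) (hconc : ConcaveOn ℝ (Set.Ici 0) f)
    (h0 : f 0 = 0) (hd : HasDerivWithinAt f d (Set.Ici 0) 0)
    {x : ℝ} (hx : 0 < x) : f x ≤ d * x := by
  have htend : Filter.Tendsto (slope f 0) (nhdsWithin 0 (Set.Ici 0 \ {0})) (nhds d) :=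
    (hasDerivWithinAt_iff_tendsto_slope).1 hd
  have hset : Set.Ici (0:ℝ) \ {0} = Set.Ioi 0 := Set.Ici_sdiff_left
  rw [hset] at htend
  have hle : f x / x ≤ d := by
    refine ge_of_tendsto htend ?_
    have hmem : Set.Ioo (-x) x ∈ nhds (0:ℝ) := Ioo_mem_nhds (by linarith) hx
    filter_upwards [Filter.inter_mem (nhdsWithin_le_nhds hmem) self_mem_nhdsWithin]
      with t ht
    obtain ⟨⟨_, htx⟩, ht0⟩ := ht
    have ht0 : (0:ℝ) < t := ht0
    have key : t * f x ≤ x * f t := slope_anti' f hconc h0 ht0 htx.le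
    have : f x / x ≤ f t / t := by
      rw [div_le_div_iff₀ hx ht0]
      linarith [key]
    simpa [slope_def_field, h0, div_eq_mul_inv] using this
  calc f x = f x / x * x := by field_simp
    _ ≤ d * x := mul_le_mul_of_nonneg_right hle hx.le

/-- Rider-welfare price of anarchy bound: for any equilibrium allocation `xEq`
and any allocation `xs` of the same total driver mass `D`, the rider welfare of
`xs` is at most `(1 + pmax / pmin)` times that of `xEq`. -/
theorem rider_welfare_poa_bound
    (n : ℕ) (p : Fin n → ℝ) (Λ : Fin n → ℝ → ℝ) (d : Fin n → ℝ) (D : ℝ)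
    (pmin pmax : ℝ) (hpmin : 0 < pmin) (hpminmax : pmin ≤ pmax)
    (hD : 0 < D)
    (hpl : ∀ i, pmin ≤ p i) (hpu : ∀ i, p i ≤ pmax)
    (hcont : ∀ i, ContinuousOn (Λ i) (Set.Ici 0))
    (hmono : ∀ i, MonotoneOn (Λ i) (Set.Ici 0))
    (hconc : ∀ i, ConcaveOn ℝ (Set.Ici 0) (Λ i))
    (h0 : ∀ i, Λ i 0 = 0)
    (hnn : ∀ i x, 0 ≤ x → 0 ≤ Λ i x)
    (hd : ∀ i, HasDerivWithinAt (Λ i) (d i) (Set.Ici 0) 0)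
    (xEq : Fin n → ℝ) (hxEqnn : ∀ i, 0 ≤ xEq i) (hsumEq : ∑ i, xEq i = D)
    (πEq : ℝ)
    (heq1 : ∀ i, 0 < xEq i → p i * Λ i (xEq i) / xEq i = πEq)
    (heq2 : ∀ j, (if 0 < xEq j then p j * Λ j (xEq j) / xEq j else p j * d j) ≤ πEq)
    (xs : Fin n → ℝ) (hxsnn : ∀ i, 0 ≤ xs i) (hsum : ∑ i, xs i = D) :
    ∑ i, Λ i (xs i) ≤ (1 + pmax / pmin) * ∑ i, Λ i (xEq i) := by
  -- πEq ≥ 0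
  have hπ : 0 ≤ πEq := by
    obtain ⟨i0, hi0⟩ : ∃ i, 0 < xEq i := by
      by_contra h
      push_neg at h
      have : ∑ i, xEq i ≤ 0 := Finset.sum_nonpos (fun i _ => h i)
      rw [hsumEq] at this; linarith
    rw [← heq1 i0 hi0]
    have h1 := hnn i0 (xEq i0) hi0.le
    have h2 : 0 ≤ p i0 := le_trans hpmin.le (hpl i0)
    exact div_nonneg (mul_nonneg h2 h1) hi0.le
  -- key per-route inequality for xs
  have key : ∀ i, Λ i (xs i) ≤ Λ i (xEq i) + πEq * xs i / pmin := by
    intro i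
    rcases le_or_gt (xs i) (xEq i) with hle | hlt
    · have h1 : Λ i (xs i) ≤ Λ i (xEq i) := hmono i (hxsnn i) (hxEqnn i) hle
      have h2 : 0 ≤ πEq * xs i / pmin :=
        div_nonneg (mul_nonneg hπ (hxsnn i)) hpmin.le
      linarith
    · -- xs i > xEq i ≥ 0, so xs i > 0
      have hxsi : 0 < xs i := lt_of_le_of_lt (hxEqnn i) hlt
      have hbound : p i * Λ i (xs i) / xs i ≤ πEq := by
        rcases (hxEqnn i).lt_or_eq with hpos | hzero
        · -- xEq i > 0
          have hsl : xEq i * Λ i (xs i) ≤ xs i * Λ i (xEq i) :=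
            slope_anti' (Λ i) (hconc i) (h0 i) hpos hlt.le
          have heq := heq1 i hpos
          have hpi : 0 < p i := lt_of_lt_of_le hpmin (hpl i)
          rw [← heq]
          rw [div_le_div_iff₀ hxsi hpos]
          nlinarith [hsl, hpi.le]
        · -- xEq i = 0
          have h2 := heq2 i
          rw [if_neg (by rw [← hzero]; exact lt_irrefl 0)] at h2
          have hΛ : Λ i (xs i) ≤ d i * xs i :=
            deriv_bound' (Λ i) (d i) (hconc i) (h0 i) (hd i) hxsi
          have hpi : 0 < p i := lt_of_lt_of_le hpmin (hpl i)
          calc p i * Λ i (xs i) / xs i ≤ p i * (d i * xs i) / xs i := by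
                gcongr
            _ = p i * d i := by field_simp
            _ ≤ πEq := h2
      -- Λ i (xs i) ≤ πEq * xs i / p i ≤ πEq * xs i / pmin
      have hpi : 0 < p i := lt_of_lt_of_le hpmin (hpl i)
      have h1 : p i * Λ i (xs i) ≤ πEq * xs i := by
        rw [div_le_iff₀ hxsi] at hbound; linarith
      have h2 : pmin * Λ i (xs i) ≤ πEq * xs i := by
        have hΛnn := hnn i (xs i) hxsi.le
        nlinarith [hpl i]
      have h3 : Λ i (xs i) ≤ πEq * xs i / pmin := by
        rw [le_div_iff₀ hpmin]; linarith
      have h4 : 0 ≤ Λ i (xEq i) := hnn i (xEq i) (hxEqnn i)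
      linarith
  -- sum up
  have hsum1 : ∑ i, Λ i (xs i) ≤ ∑ i, Λ i (xEq i) + πEq * D / pmin := by
    calc ∑ i, Λ i (xs i) ≤ ∑ i, (Λ i (xEq i) + πEq * xs i / pmin) :=
          Finset.sum_le_sum (fun i _ => key i)
      _ = ∑ i, Λ i (xEq i) + ∑ i, πEq * xs i / pmin := Finset.sum_add_distrib
      _ = ∑ i, Λ i (xEq i) + πEq * D / pmin := by
          rw [← Finset.sum_div, ← Finset.mul_sum, hsum]
  -- πEq * D ≤ pmax * R(xEq)
  have hπD : πEq * D ≤ pmax * ∑ i, Λ i (xEq i) := by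
    rw [← hsumEq, Finset.mul_sum, Finset.mul_sum]
    apply Finset.sum_le_sum
    intro i _
    rcases (hxEqnn i).lt_or_eq with hpos | hzero
    · have heq := heq1 i hpos
      have : πEq * xEq i = p i * Λ i (xEq i) := by
        rw [← heq]; field_simp
      rw [this]
      exact mul_le_mul_of_nonneg_right (hpu i) (hnn i (xEq i) hpos.le)
    · rw [← hzero, h0 i]; simp
  have hR : 0 ≤ ∑ i, Λ i (xEq i) :=
    Finset.sum_nonneg (fun i _ => hnn i (xEq i) (hxEqnn i))
  have hdivle : πEq * D / pmin ≤ (pmax * ∑ i, Λ i (xEq i)) / pmin := by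
    gcongr
  calc ∑ i, Λ i (xs i) ≤ ∑ i, Λ i (xEq i) + πEq * D / pmin := hsum1
    _ ≤ ∑ i, Λ i (xEq i) + (pmax * ∑ i, Λ i (xEq i)) / pmin := by linarith
    _ = (1 + pmax / pmin) * ∑ i, Λ i (xEq i) := by ring
end

section
/- Let Λ_1, Λ_2: ℝ≥0 → ℝ≥0 be continuous, non-decreasing, concave with Λ_i(0) = 0, and p_1, p_2 > 0. Define π_i(x) = p_i Λ_i(x)/x (x > 0, right derivative at 0). Suppose x* = (x_1*, x_2*) with x_1* + x_2* = 1 maximizes P(x) = p_1 Λ_1(x_1) + p_2 Λ_2(x_2) over the simplex, with π_1(x_1*) ≥ π_2(x_2*). For α ∈ [0,1], let x̃ be an induced allocation with x̃_2 ≥ min(α, x_2*), x̃_1 + x̃_2 = 1, x̃_1 ≥ x_1*, and π_1(x̃_1) ≥ π_2(x̃_2). Then P(x*) ≤ (1 + (x_2* − x̃_2)_+) · P(x̃) ≤ (2 − α) · P(x̃). -/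
open Classical Filter

lemma lpf_slope_anti (f : ℝ → ℝ) (hf : ConcaveOn ℝ (Set.Ici 0) f) (h0 : f 0 = 0)
    {a b : ℝ} (ha : 0 < a) (hab : a ≤ b) : a * f b ≤ b * f a := by
  have hb : 0 < b := lt_of_lt_of_le ha hab
  have ht1 : (0:ℝ) ≤ 1 - a / b := by
    rw [sub_nonneg, div_le_one hb]; exact hab
  have ht2 : (0:ℝ) ≤ a / b := by positivity
  have key := hf.2 (Set.mem_Ici.2 (le_refl (0:ℝ))) (Set.mem_Ici.2 hb.le) ht1 ht2 (by ring)
  simp only [smul_eq_mul, mul_zero, zero_add, h0] at key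
  rw [div_mul_cancel₀ _ hb.ne'] at key
  -- key : a / b * f b ≤ f a
  have hmul := mul_le_mul_of_nonneg_left key hb.le
  have heq : b * (a / b * f b) = a * f b := by field_simp
  rw [heq] at hmul
  exact hmul

lemma lpf_le_deriv (f : ℝ → ℝ) (d : ℝ) (hf : ConcaveOn ℝ (Set.Ici 0) f) (h0 : f 0 = 0)
    (hd : HasDerivWithinAt f d (Set.Ici 0) 0) {x : ℝ} (hx : 0 < x) : f x ≤ d * x := by
  have hslope := hasDerivWithinAt_iff_tendsto_slope.1 hd
  have hset : (Set.Ici (0:ℝ)) \ {0} = Set.Ioi 0 := by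
    ext y; simp [lt_iff_le_and_ne, eq_comm]
  rw [hset] at hslope
  have hev : ∀ᶠ y in nhdsWithin (0:ℝ) (Set.Ioi 0), f x / x ≤ slope f 0 y := by
    filter_upwards [self_mem_nhdsWithin, mem_nhdsWithin_of_mem_nhds (Iio_mem_nhds hx)]
      with y hy hyx
    have hy0 : 0 < y := hy
    have hxy : y ≤ x := (Set.mem_Iio.1 hyx).le
    have := lpf_slope_anti f hf h0 hy0 hxy
    rw [slope_def_field, h0, sub_zero, sub_zero, div_le_div_iff₀ hx hy0]
    nlinarith
  have hle : f x / x ≤ d := ge_of_tendsto hslope hev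
  rwa [div_le_iff₀ hx] at hle


/-- Profit-ratio bound for the Lowest Profit First Stackelberg strategy with
two routes: the induced allocation `x̃` satisfies
`P(x*) ≤ (1 + (x₂* − x̃₂)₊) P(x̃) ≤ (2 − α) P(x̃)`. -/
theorem lpf_profit_ratio_two_routes
    (Λ1 Λ2 : ℝ → ℝ) (p1 p2 d1 d2 α : ℝ)
    (hp1 : 0 < p1) (hp2 : 0 < p2)
    (hcont1 : ContinuousOn Λ1 (Set.Ici 0)) (hcont2 : ContinuousOn Λ2 (Set.Ici 0))
    (hmono1 : MonotoneOn Λ1 (Set.Ici 0)) (hmono2 : MonotoneOn Λ2 (Set.Ici 0))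
    (hconc1 : ConcaveOn ℝ (Set.Ici 0) Λ1) (hconc2 : ConcaveOn ℝ (Set.Ici 0) Λ2)
    (h01 : Λ1 0 = 0) (h02 : Λ2 0 = 0)
    (hnn1 : ∀ x, 0 ≤ x → 0 ≤ Λ1 x) (hnn2 : ∀ x, 0 ≤ x → 0 ≤ Λ2 x)
    (hd1 : HasDerivWithinAt Λ1 d1 (Set.Ici 0) 0)
    (hd2 : HasDerivWithinAt Λ2 d2 (Set.Ici 0) 0)
    (π1 π2 : ℝ → ℝ)
    (hπ1 : ∀ x, π1 x = if 0 < x then p1 * Λ1 x / x else p1 * d1)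
    (hπ2 : ∀ x, π2 x = if 0 < x then p2 * Λ2 x / x else p2 * d2)
    (hα : α ∈ Set.Icc (0 : ℝ) 1)
    (x1s x2s : ℝ) (hx1s : 0 ≤ x1s) (hx2s : 0 ≤ x2s) (hsums : x1s + x2s = 1)
    -- x* maximizes cumulative profit over the unit simplex
    (hopt : ∀ y1 y2 : ℝ, 0 ≤ y1 → 0 ≤ y2 → y1 + y2 = 1 →
      p1 * Λ1 y1 + p2 * Λ2 y2 ≤ p1 * Λ1 x1s + p2 * Λ2 x2s)
    (hord : π2 x2s ≤ π1 x1s)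
    (xt1 xt2 : ℝ) (hxt1 : 0 ≤ xt1) (hxt2 : 0 ≤ xt2)
    (hsumt : xt1 + xt2 = 1)
    (hxt2lb : min α x2s ≤ xt2)
    (hxt1lb : x1s ≤ xt1)
    (hordt : π2 xt2 ≤ π1 xt1) :
    p1 * Λ1 x1s + p2 * Λ2 x2s ≤
        (1 + max (x2s - xt2) 0) * (p1 * Λ1 xt1 + p2 * Λ2 xt2) ∧
    (1 + max (x2s - xt2) 0) * (p1 * Λ1 xt1 + p2 * Λ2 xt2) ≤
        (2 - α) * (p1 * Λ1 xt1 + p2 * Λ2 xt2) := by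

  have hP : 0 ≤ p1 * Λ1 xt1 + p2 * Λ2 xt2 := by
    have := hnn1 xt1 hxt1; have := hnn2 xt2 hxt2; positivity
  have hxt2le : xt2 ≤ x2s := by linarith
  have hmax : max (x2s - xt2) 0 = x2s - xt2 := max_eq_left (by linarith)
  rw [hmax]
  constructor
  · -- first inequality
    have key1 : p1 * Λ1 x1s ≤ p1 * Λ1 xt1 :=
      mul_le_mul_of_nonneg_left (hmono1 (Set.mem_Ici.2 hx1s) (Set.mem_Ici.2 hxt1) hxt1lb) hp1.le
    have key3 : π2 xt2 ≤ p1 * Λ1 xt1 + p2 * Λ2 xt2 := by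
      rcases eq_or_lt_of_le hxt2 with h0t | hpos
      · -- xt2 = 0
        have hxt1one : xt1 = 1 := by linarith
        subst hxt1one
        have h1 : π1 1 = p1 * Λ1 1 := by rw [hπ1, if_pos one_pos, div_one]
        have hL0 : Λ2 xt2 = 0 := by rw [← h0t, h02]
        rw [hL0]
        linarith [hordt, h1]
      · -- xt2 > 0
        have h2 : π2 xt2 = p2 * Λ2 xt2 / xt2 := by rw [hπ2]; simp [hpos]
        rcases eq_or_lt_of_le hxt1 with h0t1 | hpos1
        · -- xt1 = 0
          have hxt2one : xt2 = 1 := by linarith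
          rw [h2, hxt2one, div_one, ← h0t1, h01]
          have := hnn2 1 zero_le_one
          linarith
        · have h1 : π1 xt1 = p1 * Λ1 xt1 / xt1 := by rw [hπ1]; simp [hpos1]
          have hordt' : p2 * Λ2 xt2 / xt2 ≤ p1 * Λ1 xt1 / xt1 := by
            rw [← h1, ← h2]; exact hordt
          have hmul := mul_le_mul_of_nonneg_left hordt' hxt1
          have e1 : xt1 * (p1 * Λ1 xt1 / xt1) = p1 * Λ1 xt1 := by field_simp
          have e2 : xt2 * (p2 * Λ2 xt2 / xt2) = p2 * Λ2 xt2 := by field_simp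
          have e3 : xt1 * (p2 * Λ2 xt2 / xt2) + xt2 * (p2 * Λ2 xt2 / xt2)
              = p2 * Λ2 xt2 / xt2 := by rw [← add_mul, hsumt, one_mul]
          rw [h2]
          linarith
    have key2 : p2 * Λ2 x2s ≤ p2 * Λ2 xt2 + (x2s - xt2) * π2 xt2 := by
      rcases eq_or_lt_of_le hxt2 with h0t | hpos
      · -- xt2 = 0
        have hπ20 : π2 xt2 = p2 * d2 := by rw [hπ2, ← h0t]; simp
        have hL0 : Λ2 xt2 = 0 := by rw [← h0t, h02]
        rw [hL0, hπ20, ← h0t]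
        rcases eq_or_lt_of_le hx2s with h0s | hposs
        · rw [← h0s, h02]; simp
        · have hld := lpf_le_deriv Λ2 d2 hconc2 h02 hd2 hposs
          nlinarith [mul_le_mul_of_nonneg_left hld hp2.le]
      · -- xt2 > 0
        have h2 : π2 xt2 = p2 * Λ2 xt2 / xt2 := by rw [hπ2]; simp [hpos]
        have hsl := lpf_slope_anti Λ2 hconc2 h02 hpos hxt2le
        have hx : (x2s - xt2) * (p2 * Λ2 xt2 / xt2)
            = p2 * Λ2 xt2 * x2s / xt2 - p2 * Λ2 xt2 := by field_simp
        rw [h2, hx]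
        have h : p2 * Λ2 x2s * xt2 ≤ p2 * Λ2 xt2 * x2s := by nlinarith
        have := (le_div_iff₀ hpos).2 h
        linarith
    have hδ : 0 ≤ x2s - xt2 := by linarith
    have key4 : (x2s - xt2) * π2 xt2 ≤ (x2s - xt2) * (p1 * Λ1 xt1 + p2 * Λ2 xt2) :=
      mul_le_mul_of_nonneg_left key3 hδ
    nlinarith [key1, key2, key4]
  · -- second inequality
    have hδle : x2s - xt2 ≤ 1 - α := by
      rcases le_total α x2s with h | h
      · have : min α x2s = α := min_eq_left h
        linarith [hxt2lb, this ▸ hxt2lb]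
      · have hm : min α x2s = x2s := min_eq_right h
        rw [hm] at hxt2lb
        linarith [hα.2]
    have : (1 : ℝ) + (x2s - xt2) ≤ 2 - α := by linarith
    exact mul_le_mul_of_nonneg_right this hP
end

section
/- Let Λ_i: ℝ≥0 → ℝ≥0 be continuous, non-decreasing, concave, Λ_i(0) = 0, with p_i > 0, for i ∈ [n]. Suppose x^(1) and x^(2) are both equilibrium allocations with Σ_i x_i^(1) = Σ_i x_i^(2) = D > 0. Then the equilibrium per-driver profits coincide (π^(1) = π^(2)) and the cumulative profits are equal: Σ_i p_i Λ_i(x_i^(1)) = Σ_i p_i Λ_i(x_i^(2)). -/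
open Classical

lemma slope_anti_aux {Λ : ℝ → ℝ} (hconc : ConcaveOn ℝ (Set.Ici 0) Λ)
    (h0 : Λ 0 = 0) {a b : ℝ} (ha : 0 < a) (hab : a ≤ b) :
    Λ b / b ≤ Λ a / a := by
  have hb : 0 < b := ha.trans_le hab
  have hta : (0:ℝ) ≤ a / b := by positivity
  have htb : (0:ℝ) ≤ 1 - a / b := by
    rw [sub_nonneg]; exact div_le_one_of_le₀ hab hb.le
  have key := hconc.2 (Set.mem_Ici.mpr hb.le) (Set.mem_Ici.mpr (le_refl (0:ℝ)))
    hta htb (by ring)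
  simp only [smul_eq_mul, mul_zero, add_zero, h0] at key
  have hab' : a / b * b = a := div_mul_cancel₀ a hb.ne'
  rw [hab'] at key
  rw [div_le_div_iff₀ hb ha]
  have h2 := mul_le_mul_of_nonneg_right key hb.le
  rw [mul_right_comm, hab'] at h2
  rw [mul_comm (Λ b) a]
  exact h2

lemma ratio_le_deriv_aux {Λ : ℝ → ℝ} (hconc : ConcaveOn ℝ (Set.Ici 0) Λ)
    (h0 : Λ 0 = 0) {d : ℝ} (hd : HasDerivWithinAt Λ d (Set.Ici 0) 0)
    {x : ℝ} (hx : 0 < x) : Λ x / x ≤ d := by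
  have hslope : Filter.Tendsto (slope Λ 0) (nhdsWithin 0 ((Set.Ici 0) \ {0}))
      (nhds d) := hasDerivWithinAt_iff_tendsto_slope.mp hd
  have hset : (Set.Ici (0:ℝ)) \ {0} = Set.Ioi 0 := by
    ext t
    simp [Set.mem_diff, lt_iff_le_and_ne, eq_comm, and_comm]
  rw [hset] at hslope
  refine ge_of_tendsto hslope ?_
  have hmem : Set.Ioo (-x) x ∈ nhds (0:ℝ) := Ioo_mem_nhds (by linarith) hx
  filter_upwards [Filter.inter_mem (Filter.mem_inf_of_left hmem)
    (Filter.mem_inf_of_right (Filter.mem_principal_self _))] with t ht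
  obtain ⟨⟨ht1, ht2⟩, ht3⟩ := ht
  have ht0 : 0 < t := ht3
  have := slope_anti_aux hconc h0 ht0 ht2.le
  simpa [slope, h0, div_eq_mul_inv, mul_comm] using this

lemma pi_le_aux (n : ℕ) (p : Fin n → ℝ) (Λ : Fin n → ℝ → ℝ) (d : Fin n → ℝ) (D : ℝ)
    (hD : 0 < D) (hp : ∀ i, 0 < p i)
    (hconc : ∀ i, ConcaveOn ℝ (Set.Ici 0) (Λ i))
    (h0 : ∀ i, Λ i 0 = 0)
    (hd : ∀ i, HasDerivWithinAt (Λ i) (d i) (Set.Ici 0) 0)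
    (x1 x2 : Fin n → ℝ)
    (hx1nn : ∀ i, 0 ≤ x1 i) (hx2nn : ∀ i, 0 ≤ x2 i)
    (hsum1 : ∑ i, x1 i = D) (hsum2 : ∑ i, x2 i = D)
    (π1 π2 : ℝ)
    (heq11 : ∀ i, 0 < x1 i → p i * Λ i (x1 i) / x1 i = π1)
    (heq22 : ∀ j, (if 0 < x2 j then p j * Λ j (x2 j) / x2 j else p j * d j) ≤ π2) :
    π1 ≤ π2 := by
  by_contra hlt
  push_neg at hlt
  -- hlt : π2 < π1
  have hkey : ∀ i, x1 i ≤ x2 i ∧ (0 < x1 i → x1 i < x2 i) := by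
    intro i
    rcases lt_or_ge 0 (x1 i) with hx1 | hx1
    · have hπ1 : p i * Λ i (x1 i) / x1 i = π1 := heq11 i hx1
      have h22 := heq22 i
      by_cases hx2 : 0 < x2 i
      · rw [if_pos hx2] at h22
        -- if x2 i ≤ x1 i then profit at x1 ≤ profit at x2 : contradiction
        have hlt2 : x1 i < x2 i := by
          by_contra hge
          push_neg at hge
          have := slope_anti_aux (hconc i) (h0 i) hx2 hge
          have : p i * Λ i (x1 i) / x1 i ≤ p i * Λ i (x2 i) / x2 i := by
            rw [mul_div_assoc, mul_div_assoc]
            exact mul_le_mul_of_nonneg_left this (hp i).le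
          linarith
        exact ⟨hlt2.le, fun _ => hlt2⟩
      · rw [if_neg hx2] at h22
        have hratio := ratio_le_deriv_aux (hconc i) (h0 i) (hd i) hx1
        have : p i * (Λ i (x1 i) / x1 i) ≤ p i * d i :=
          mul_le_mul_of_nonneg_left hratio (hp i).le
        rw [← mul_div_assoc] at this
        linarith
    · have hx1' : x1 i = 0 := le_antisymm hx1 (hx1nn i)
      exact ⟨hx1'.le.trans (hx2nn i), fun h => absurd hx1' h.ne'⟩
  -- get some i with 0 < x1 i
  have hex : ∃ i, 0 < x1 i := by
    by_contra hno
    push_neg at hno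
    have : ∑ i, x1 i = 0 := Finset.sum_eq_zero fun i _ =>
      le_antisymm (hno i) (hx1nn i)
    rw [hsum1] at this
    linarith
  obtain ⟨i0, hi0⟩ := hex
  have hsumlt : ∑ i, x1 i < ∑ i, x2 i := by
    refine Finset.sum_lt_sum (fun i _ => (hkey i).1) ⟨i0, Finset.mem_univ _, (hkey i0).2 hi0⟩
  rw [hsum1, hsum2] at hsumlt
  exact lt_irrefl D hsumlt

/-- Any two equilibrium driver allocations with the same total mass `D` have
the same equilibrium per-driver profit and the same cumulative profit. -/
theorem equilibrium_profit_unique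
    (n : ℕ) (p : Fin n → ℝ) (Λ : Fin n → ℝ → ℝ) (d : Fin n → ℝ) (D : ℝ)
    (hD : 0 < D)
    (hp : ∀ i, 0 < p i)
    (hcont : ∀ i, ContinuousOn (Λ i) (Set.Ici 0))
    (hmono : ∀ i, MonotoneOn (Λ i) (Set.Ici 0))
    (hconc : ∀ i, ConcaveOn ℝ (Set.Ici 0) (Λ i))
    (h0 : ∀ i, Λ i 0 = 0)
    (hnn : ∀ i x, 0 ≤ x → 0 ≤ Λ i x)
    (hd : ∀ i, HasDerivWithinAt (Λ i) (d i) (Set.Ici 0) 0)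
    (x1 x2 : Fin n → ℝ)
    (hx1nn : ∀ i, 0 ≤ x1 i) (hx2nn : ∀ i, 0 ≤ x2 i)
    (hsum1 : ∑ i, x1 i = D) (hsum2 : ∑ i, x2 i = D)
    (π1 π2 : ℝ)
    (heq11 : ∀ i, 0 < x1 i → p i * Λ i (x1 i) / x1 i = π1)
    (heq12 : ∀ j, (if 0 < x1 j then p j * Λ j (x1 j) / x1 j else p j * d j) ≤ π1)
    (heq21 : ∀ i, 0 < x2 i → p i * Λ i (x2 i) / x2 i = π2)
    (heq22 : ∀ j, (if 0 < x2 j then p j * Λ j (x2 j) / x2 j else p j * d j) ≤ π2) :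
    π1 = π2 ∧ ∑ i, p i * Λ i (x1 i) = ∑ i, p i * Λ i (x2 i) := by
  have hle1 : π1 ≤ π2 := pi_le_aux n p Λ d D hD hp hconc h0 hd x1 x2 hx1nn hx2nn
    hsum1 hsum2 π1 π2 heq11 heq22
  have hle2 : π2 ≤ π1 := pi_le_aux n p Λ d D hD hp hconc h0 hd x2 x1 hx2nn hx1nn
    hsum2 hsum1 π2 π1 heq21 heq12
  have hpi : π1 = π2 := le_antisymm hle1 hle2
  refine ⟨hpi, ?_⟩
  have h1 : ∀ i, p i * Λ i (x1 i) = π1 * x1 i := by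
    intro i
    rcases lt_or_ge 0 (x1 i) with hx | hx
    · have := heq11 i hx
      field_simp at this ⊢
      linarith [this]
    · have hx0 : x1 i = 0 := le_antisymm hx (hx1nn i)
      rw [hx0, h0 i, mul_zero, mul_zero]
  have h2 : ∀ i, p i * Λ i (x2 i) = π2 * x2 i := by
    intro i
    rcases lt_or_ge 0 (x2 i) with hx | hx
    · have := heq21 i hx
      field_simp at this ⊢
      linarith [this]
    · have hx0 : x2 i = 0 := le_antisymm hx (hx2nn i)
      rw [hx0, h0 i, mul_zero, mul_zero]
  calc ∑ i, p i * Λ i (x1 i) = ∑ i, π1 * x1 i := by simp [h1]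
    _ = π1 * D := by rw [← Finset.mul_sum, hsum1]
    _ = π2 * D := by rw [hpi]
    _ = ∑ i, π2 * x2 i := by rw [← Finset.mul_sum, hsum2]
    _ = ∑ i, p i * Λ i (x2 i) := by simp [h2]
end

section
/- Under the same setup, if additionally each per-driver profit function π_i is strictly decreasing on [0, ∞) (e.g., when the quadratic coefficient of each demand function is strictly positive), then the equilibrium allocation with total mass D is unique: x^(1) = x^(2). -/
open Classical

/-- If additionally each per-driver profit function is strictly decreasing on
`[0, ∞)`, then the equilibrium driver allocation with total mass `D` is
unique. -/
theorem equilibrium_allocation_unique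
    (n : ℕ) (p : Fin n → ℝ) (Λ : Fin n → ℝ → ℝ) (d : Fin n → ℝ) (D : ℝ)
    (hD : 0 < D)
    (hp : ∀ i, 0 < p i)
    (hcont : ∀ i, ContinuousOn (Λ i) (Set.Ici 0))
    (hmono : ∀ i, MonotoneOn (Λ i) (Set.Ici 0))
    (hconc : ∀ i, ConcaveOn ℝ (Set.Ici 0) (Λ i))
    (h0 : ∀ i, Λ i 0 = 0)
    (hnn : ∀ i x, 0 ≤ x → 0 ≤ Λ i x)
    (hd : ∀ i, HasDerivWithinAt (Λ i) (d i) (Set.Ici 0) 0)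
    (π : Fin n → ℝ → ℝ)
    (hπ : ∀ i x, π i x = if 0 < x then p i * Λ i x / x else p i * d i)
    (hstrict : ∀ i, StrictAntiOn (π i) (Set.Ici 0))
    (x1 x2 : Fin n → ℝ)
    (hx1nn : ∀ i, 0 ≤ x1 i) (hx2nn : ∀ i, 0 ≤ x2 i)
    (hsum1 : ∑ i, x1 i = D) (hsum2 : ∑ i, x2 i = D)
    (π1 π2 : ℝ)
    (heq11 : ∀ i, 0 < x1 i → π i (x1 i) = π1)
    (heq12 : ∀ j, π j (x1 j) ≤ π1)
    (heq21 : ∀ i, 0 < x2 i → π i (x2 i) = π2)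
    (heq22 : ∀ j, π j (x2 j) ≤ π2) :
    x1 = x2 := by
  have key1 : ∀ i, x2 i < x1 i → π1 < π2 := by
    intro i hi
    have hpos : 0 < x1 i := lt_of_le_of_lt (hx2nn i) hi
    have h2 : π i (x1 i) < π i (x2 i) :=
      hstrict i (Set.mem_Ici.mpr (hx2nn i)) (Set.mem_Ici.mpr hpos.le) hi
    calc π1 = π i (x1 i) := (heq11 i hpos).symm
      _ < π i (x2 i) := h2
      _ ≤ π2 := heq22 i
  have key2 : ∀ i, x1 i < x2 i → π2 < π1 := by
    intro i hi
    have hpos : 0 < x2 i := lt_of_le_of_lt (hx1nn i) hi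
    have h2 : π i (x2 i) < π i (x1 i) :=
      hstrict i (Set.mem_Ici.mpr (hx1nn i)) (Set.mem_Ici.mpr hpos.le) hi
    calc π2 = π i (x2 i) := (heq21 i hpos).symm
      _ < π i (x1 i) := h2
      _ ≤ π1 := heq12 i
  have hle : ∀ i, x1 i ≤ x2 i := by
    intro i
    by_contra hlt
    push_neg at hlt
    have hπ12 := key1 i hlt
    -- there must exist j with x1 j < x2 j since sums are equal
    have : ∃ j, x1 j < x2 j := by
      by_contra hno
      push_neg at hno
      have hs : ∑ j, x2 j < ∑ j, x1 j :=
        Finset.sum_lt_sum (fun j _ => hno j) ⟨i, Finset.mem_univ i, hlt⟩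
      rw [hsum1, hsum2] at hs
      exact lt_irrefl D hs
    obtain ⟨j, hj⟩ := this
    exact absurd hπ12 (not_lt.mpr (key2 j hj).le)
  funext i
  by_contra hne
  have hlt : x1 i < x2 i := lt_of_le_of_ne (hle i) hne
  have hs : ∑ j, x1 j < ∑ j, x2 j :=
    Finset.sum_lt_sum (fun j _ => hle j) ⟨i, Finset.mem_univ i, hlt⟩
  rw [hsum1, hsum2] at hs
  exact lt_irrefl D hs
end

section
/- Let Λ̃_i(x) = L_i·min(x/k_i, 1) with L_i, k_i, p_i > 0 for i ∈ [n], and total driver mass D with centrally controlled fraction α. Let x^0 be an equilibrium of the (1−α)D privatized drivers under profits p_i Λ̃_i(x)/x with equilibrium profit π^0. Then for any Stackelberg outcome: if (x, y) is such that y ⪰ 0, ‖y‖_1 = αD, x is an equilibrium response with per-driver profit π, then for every route i with x_i^0 > k_i, it holds that x_i + y_i ≥ x_i^0. -/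
open Classical

/-- In the L-NCF Stackelberg analysis with piecewise-linear demands
`Λ̃ᵢ x = Lᵢ * min (x/kᵢ) 1`: any Stackelberg outcome `(x, y)` keeps the total
drivers on every over-saturated no-intervention equilibrium route `i`
(i.e. `x⁰ᵢ > kᵢ`) at least at its no-intervention level `x⁰ᵢ`. -/
theorem stackelberg_keeps_oversaturated_routes
    (n : ℕ) (p L k : Fin n → ℝ) (D α : ℝ)
    (hp : ∀ i, 0 < p i) (hL : ∀ i, 0 < L i) (hk : ∀ i, 0 < k i)
    (hD : 0 < D) (hα0 : 0 ≤ α) (hα1 : α ≤ 1)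
    (Λt : Fin n → ℝ → ℝ)
    (hΛt : ∀ i x, Λt i x = L i * min (x / k i) 1)
    (q : Fin n → ℝ → ℝ)
    (hq : ∀ i z, q i z = if 0 < z then p i * Λt i z / z else p i * L i / k i)
    -- x⁰ : equilibrium of the (1-α)D privatized drivers without intervention
    (x0 : Fin n → ℝ) (hx0nn : ∀ i, 0 ≤ x0 i)
    (hsum0 : ∑ i, x0 i = (1 - α) * D)
    (π0 : ℝ)
    (heq01 : ∀ i, 0 < x0 i → q i (x0 i) = π0)
    (heq02 : ∀ j, q j (x0 j) ≤ π0)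
    -- Stackelberg outcome (x, y)
    (x y : Fin n → ℝ) (hxnn : ∀ i, 0 ≤ x i) (hynn : ∀ i, 0 ≤ y i)
    (hsumy : ∑ i, y i = α * D) (hsumx : ∑ i, x i = (1 - α) * D)
    (π : ℝ)
    (heq1 : ∀ i, 0 < x i → q i (x i + y i) = π)
    (heq2 : ∀ j, q j (x j + y j) ≤ π) :
    ∀ i, k i < x0 i → x0 i ≤ x i + y i := by
  -- closed form for q
  have hqval : ∀ j z, q j z = p j * L j / max (k j) z := by
    intro j z
    rw [hq, hΛt]
    by_cases hz : 0 < z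
    · simp only [if_pos hz]
      rcases le_or_gt z (k j) with h | h
      · rw [max_eq_left h, min_eq_left (by
          rw [div_le_one (hk j)]; exact h)]
        rw [show p j * (L j * (z / k j)) / z = p j * L j * (z / z) / k j by ring,
          div_self hz.ne', mul_one]
      · rw [max_eq_right h.le, min_eq_right (by
          rw [le_div_iff₀ (hk j)]; linarith)]
        ring
    · rw [if_neg hz, max_eq_left (by linarith [hk j, not_lt.mp hz])]
  -- q is antitone in z
  have hqmono : ∀ j z1 z2, z1 ≤ z2 → q j z2 ≤ q j z1 := by
    intro j z1 z2 h
    rw [hqval, hqval]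
    apply div_le_div_of_nonneg_left (mul_pos (hp j) (hL j)).le
      (lt_of_lt_of_le (hk j) (le_max_left _ _)) (max_le_max le_rfl h)
  intro i hi
  by_contra hcon
  push_neg at hcon
  have hx0i : 0 < x0 i := lt_trans (hk i) hi
  -- π0 < π
  have hπ0 : q i (x0 i) = π0 := heq01 i hx0i
  have hmaxlt : max (k i) (x i + y i) < x0 i := max_lt hi hcon
  have hqi : q i (x0 i) < q i (x i + y i) := by
    rw [hqval, hqval, max_eq_right hi.le]
    exact div_lt_div_of_pos_left (mul_pos (hp i) (hL i))
      (lt_of_lt_of_le (hk i) (le_max_left _ _)) hmaxlt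
  have hππ : π0 < π := lt_of_lt_of_le (hπ0 ▸ hqi) (heq2 i)
  -- every active route has x j < x0 j
  have hlt : ∀ j, 0 < x j → x j < x0 j := by
    intro j hj
    have h1 : q j (x j + y j) = π := heq1 j hj
    have h2 : x j + y j < x0 j := by
      by_contra h
      push_neg at h
      have := hqmono j (x0 j) (x j + y j) h
      have := heq02 j
      linarith
    linarith [hynn j]
  have hle : ∀ j, x j ≤ x0 j := by
    intro j
    rcases lt_or_eq_of_le (hxnn j) with h | h
    · exact (hlt j h).le
    · rw [← h]; exact hx0nn j
  -- some route is active
  have hsumpos : 0 < ∑ j, x j := by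
    rw [hsumx, ← hsum0]
    calc 0 < x0 i := hx0i
    _ ≤ ∑ j, x0 j := Finset.single_le_sum (fun j _ => hx0nn j) (Finset.mem_univ i)
  have hex : ∃ j, 0 < x j := by
    by_contra h
    push_neg at h
    have : ∑ j, x j ≤ 0 := Finset.sum_nonpos (fun j _ => h j)
    linarith
  obtain ⟨j, hj⟩ := hex
  have : ∑ j, x j < ∑ j, x0 j :=
    Finset.sum_lt_sum (fun j _ => hle j) ⟨j, Finset.mem_univ j, hlt j hj⟩
  rw [hsumx, hsum0] at this
  exact lt_irrefl _ this
end
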